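/- Let (X, I, Λ, ∫) be a pre-integration space and let I₁ be the set of sequences α : ℕ → I such that ∑_n ∫|α(n)| converges, with the extended integral ∫₁ α := ∑_n ∫ α(n). Then for every α ∈ I₁ and every n ∈ ℕ there exists β ∈ I₁ representing the same canonically integrable function (same domain {x ∈ ⋂_k dom f_{α(k)} : ∑_k |f_{α(k)}(x)| converges} and same sum ∑_k f_{β(k)} = ∑_k f_{α(k)} on it) such that ∑_k ∫|β(k)| ≤ ∫₁|α| + 2^{-n}, where ∫₁|α| := lim_N ∫|∑_{k=1}^N α(k)|. Moreover this β can be given explicitly as (∑_{k=1}^N α(k), α(N+1), α(N+2), …) for suitable N, so no choice is needed. -/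
import Mathlib


open Filter Topology

/-- A pre-integration space `(X, I, Λ, ∫)`: an inhabited set `X` with an
apartness relation, an `I`-set `Λ` of real-valued partial functions on `X`
(each index `i` has a domain `dom i` and a function `f i`, and equal partial
functions have equal indices), operations on `I` realizing scalar
multiplication, addition, absolute value and min-with-1 of the partial
functions, and a functional `∫ = integ : I → ℝ` satisfying (PIS1)–(PIS4). -/
structure PreIntegrationSpace (X I : Type*) where
  inhab : Nonempty X
  apart : X → X → Prop
  apart_irrefl : ∀ x y : X, x = y → apart x y → False
  apart_symm : ∀ x y : X, apart x y → apart y x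
  apart_cotrans : ∀ x y : X, apart x y → ∀ z : X, apart x z ∨ apart y z
  dom : I → Set X
  f : I → X → ℝ
  lam_set : ∀ i j : I, dom i = dom j → (∀ x ∈ dom i, f i x = f j x) → i = j
  smul : ℝ → I → I
  add : I → I → I
  abs : I → I
  min1 : I → I
  integ : I → ℝ
  dom_smul : ∀ a i, dom (smul a i) = dom i
  f_smul : ∀ a i, ∀ x ∈ dom i, f (smul a i) x = a * f i x
  dom_add : ∀ i j, dom (add i j) = dom i ∩ dom j
  f_add : ∀ i j, ∀ x ∈ dom i ∩ dom j, f (add i j) x = f i x + f j x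
  dom_abs : ∀ i, dom (abs i) = dom i
  f_abs : ∀ i, ∀ x ∈ dom i, f (abs i) x = |f i x|
  dom_min1 : ∀ i, dom (min1 i) = dom i
  f_min1 : ∀ i, ∀ x ∈ dom i, f (min1 i) x = min (f i x) 1
  pis1 : ∀ (a b : ℝ) (i j : I),
    integ (add (smul a i) (smul b j)) = a * integ i + b * integ j
  pis2 : ∀ (i : I) (α : ℕ → I) (ℓ : ℝ),
    (∀ m, ∀ x ∈ dom (α m), 0 ≤ f (α m) x) →
    Tendsto (fun n => ∑ k ∈ Finset.range n, integ (α k)) atTop (𝓝 ℓ) →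
    ℓ < integ i →
    ∃ x, x ∈ dom i ∧ (∀ n, x ∈ dom (α n)) ∧
      ∃ ℓ' : ℝ, Tendsto (fun n => ∑ k ∈ Finset.range n, f (α k) x) atTop (𝓝 ℓ') ∧
        ℓ' < f i x
  pis3 : ∃ i : I, integ i = 1
  pis4 : ∀ i : I,
    Tendsto (fun m : ℕ => integ (smul (m : ℝ) (min1 (smul ((m : ℝ))⁻¹ i))))
      atTop (𝓝 (integ i)) ∧
    Tendsto (fun m : ℕ => integ (smul ((m : ℝ))⁻¹ (min1 (smul (m : ℝ) (abs i)))))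
      atTop (𝓝 0)

variable {X I : Type*}

/-- Partial sums in the index set: `psum P α N = α(0) + ⋯ + α(N)`. -/
def psum (P : PreIntegrationSpace X I) (α : ℕ → I) : ℕ → I
  | 0 => α 0
  | n + 1 => P.add (psum P α n) (α (n + 1))

/-- `α : ℕ → I` is a representation, i.e. a member of `I₁`: the series
`∑_n ∫|α(n)|` converges. -/
def InI1 (P : PreIntegrationSpace X I) (α : ℕ → I) : Prop :=
  ∃ L : ℝ,
    Tendsto (fun N => ∑ k ∈ Finset.range N, P.integ (P.abs (α k))) atTop (𝓝 L)

/-- The domain of the canonically integrable function represented by `α`: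
the points of `⋂_n dom f_{α(n)}` where `∑_n |f_{α(n)}(x)|` converges. -/
def dom1 (P : PreIntegrationSpace X I) (α : ℕ → I) : Set X :=
  {x | (∀ n, x ∈ P.dom (α n)) ∧
    ∃ s : ℝ,
      Tendsto (fun N => ∑ k ∈ Finset.range N, |P.f (α k) x|) atTop (𝓝 s)}

/-- The canonically integrable function represented by `α`:
`g_α(x) = ∑_n f_{α(n)}(x)`. -/
noncomputable def g1 (P : PreIntegrationSpace X I) (α : ℕ → I) (x : X) : ℝ :=
  ∑' n, P.f (α n) x

/-- `L` is the `1`-norm `∫|α| = lim_N ∫|∑_{k≤N} α(k)|` of `α ∈ I₁`. -/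
def Norm1Is (P : PreIntegrationSpace X I) (α : ℕ → I) (L : ℝ) : Prop :=
  Tendsto (fun N => P.integ (P.abs (psum P α N))) atTop (𝓝 L)

/-- Addition in `I₁` by interleaving two representations. -/
def addSeq (P : PreIntegrationSpace X I) (α β : ℕ → I) : ℕ → I :=
  fun m => if m % 2 = 0 then α (m / 2) else β (m / 2)

/-- Negation of a representation, termwise. -/
def negSeq (P : PreIntegrationSpace X I) (β : ℕ → I) : ℕ → I :=
  fun m => P.smul (-1) (β m)

/-- Subtraction `α − β` of representations. -/
def subSeq (P : PreIntegrationSpace X I) (α β : ℕ → I) : ℕ → I :=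
  addSeq P α (negSeq P β)

lemma mem_dom_psum (P : PreIntegrationSpace X I) (α : ℕ → I) :
    ∀ (N : ℕ) (x : X), x ∈ P.dom (psum P α N) ↔ ∀ k ≤ N, x ∈ P.dom (α k)
  | 0, x => by
    simp [psum, Nat.le_zero]
  | (N + 1), x => by
    rw [psum, P.dom_add, Set.mem_inter_iff, mem_dom_psum P α N]
    constructor
    · rintro ⟨h1, h2⟩ k hk
      rcases Nat.lt_succ_iff_lt_or_eq.1 (Nat.lt_succ_of_le hk) with h | h
      · exact h1 k (Nat.lt_succ_iff.1 h)
      · exact h ▸ h2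
    · intro h
      exact ⟨fun k hk => h k (hk.trans (Nat.le_succ N)), h _ le_rfl⟩

lemma f_psum (P : PreIntegrationSpace X I) (α : ℕ → I) :
    ∀ (N : ℕ) (x : X), (∀ k ≤ N, x ∈ P.dom (α k)) →
      P.f (psum P α N) x = ∑ k ∈ Finset.range (N + 1), P.f (α k) x
  | 0, x, hx => by simp [psum]
  | (N + 1), x, hx => by
    have hxd : x ∈ P.dom (psum P α N) :=
      (mem_dom_psum P α N x).2 fun k hk => hx k (hk.trans (Nat.le_succ N))
    rw [psum, P.f_add _ _ x ⟨hxd, hx _ le_rfl⟩,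
      f_psum P α N x (fun k hk => hx k (hk.trans (Nat.le_succ N)))]
    exact (Finset.sum_range_succ _ (N + 1)).symm

lemma shift_tendsto (u : ℕ → ℝ) (c A : ℝ) (N : ℕ)
    (hu : Tendsto (fun m => ∑ k ∈ Finset.range m, u k) atTop (𝓝 A)) :
    Tendsto (fun m => ∑ k ∈ Finset.range m, (if k = 0 then c else u (N + k)))
      atTop (𝓝 (c + (A - ∑ k ∈ Finset.range (N + 1), u k))) := by
  rw [← tendsto_add_atTop_iff_nat 1]
  have key : ∀ m : ℕ,
      ∑ k ∈ Finset.range (m + 1), (if k = 0 then c else u (N + k))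
        = c + (∑ k ∈ Finset.range (m + (N + 1)), u k
            - ∑ k ∈ Finset.range (N + 1), u k) := by
    intro m
    rw [Finset.sum_range_succ', if_pos rfl,
      Finset.sum_congr rfl (fun k _ => by
        rw [if_neg k.succ_ne_zero, show N + (k + 1) = (N + 1) + k by omega]),
      show m + (N + 1) = (N + 1) + m by omega, Finset.sum_range_add]
    ring
  refine Tendsto.congr (fun m => (key m).symm) ?_
  exact tendsto_const_nhds.add
    ((hu.comp (tendsto_add_atTop_nat (N + 1))).sub tendsto_const_nhds)

lemma summable_abs_of_tendsto (g : ℕ → ℝ) (s : ℝ)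
    (h : Tendsto (fun m => ∑ k ∈ Finset.range m, |g k|) atTop (𝓝 s)) :
    Summable fun k => |g k| := by
  have hmono : Monotone fun m => ∑ k ∈ Finset.range m, |g k| := fun a b hab =>
    Finset.sum_le_sum_of_subset_of_nonneg (Finset.range_subset_range.2 hab)
      (fun i _ _ => abs_nonneg _)
  exact summable_of_sum_range_le (c := s) (fun k => abs_nonneg _)
    (fun m => hmono.ge_of_tendsto h m)

lemma abs_cond_iff (g : ℕ → ℝ) :
    (∃ s : ℝ, Tendsto (fun m => ∑ k ∈ Finset.range m, |g k|) atTop (𝓝 s))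
      ↔ Summable fun k => |g k| := by
  constructor
  · rintro ⟨s, hs⟩; exact summable_abs_of_tendsto g s hs
  · intro h; exact ⟨_, h.hasSum.tendsto_sum_nat⟩

/-- For every `α ∈ I₁` with `∫|α| = L` and every `n`, there is a representation
`β` of the same canonically integrable function, given explicitly as
`(∑_{k≤N} α(k), α(N+1), α(N+2), …)` for a suitable `N`, with
`∑_k ∫|β(k)| ≤ ∫|α| + 2^{-n}`. -/
theorem exists_good_representation (P : PreIntegrationSpace X I)
    (α : ℕ → I) (L : ℝ) (hα : InI1 P α) (hL : Norm1Is P α L) (n : ℕ) :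
    ∃ N : ℕ, ∃ β : ℕ → I,
      β = (fun k => if k = 0 then psum P α N else α (N + k)) ∧
      InI1 P β ∧
      dom1 P β = dom1 P α ∧
      (∀ x ∈ dom1 P α, g1 P β x = g1 P α x) ∧
      ∃ S : ℝ,
        Tendsto (fun m => ∑ k ∈ Finset.range m, P.integ (P.abs (β k)))
          atTop (𝓝 S) ∧
        S ≤ L + (1 / 2) ^ n := by
  obtain ⟨A, hA⟩ := hα
  have hε : (0 : ℝ) < (1 / 2) ^ (n + 1) := by positivity
  have h1 : ∀ᶠ N in atTop,
      P.integ (P.abs (psum P α N)) < L + (1 / 2) ^ (n + 1) :=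
    hL.eventually_lt_const (by linarith)
  have h2 : ∀ᶠ m in atTop,
      A - (1 / 2) ^ (n + 1) < ∑ k ∈ Finset.range m, P.integ (P.abs (α k)) :=
    hA.eventually_const_lt (by linarith)
  obtain ⟨N₁, hN₁⟩ := eventually_atTop.1 h1
  obtain ⟨N₂, hN₂⟩ := eventually_atTop.1 h2
  set N := max N₁ N₂ with hN
  set β : ℕ → I := fun k => if k = 0 then psum P α N else α (N + k) with hβ
  have hβ0 : β 0 = psum P α N := by simp [hβ]
  have hβs : ∀ k : ℕ, β (k + 1) = α (N + (k + 1)) := fun k => by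
    simp [hβ]
  -- the common limit statement for ∑ ∫|β k|
  have hTlim : Tendsto (fun m => ∑ k ∈ Finset.range m, P.integ (P.abs (β k)))
      atTop (𝓝 (P.integ (P.abs (psum P α N)) +
        (A - ∑ k ∈ Finset.range (N + 1), P.integ (P.abs (α k))))) := by
    have h := shift_tendsto (fun k => P.integ (P.abs (α k)))
      (P.integ (P.abs (psum P α N))) A N hA
    refine h.congr (fun m => Finset.sum_congr rfl fun k _ => ?_)
    rcases Nat.eq_zero_or_pos k with hk | hk
    · subst hk; rw [if_pos rfl, hβ0]
    · obtain ⟨j, rfl⟩ := Nat.exists_eq_add_of_lt hk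
      rw [if_neg (by omega), hβs]
  -- domain comparison
  have hdom : ∀ x : X, (∀ k : ℕ, x ∈ P.dom (β k)) ↔ ∀ k, x ∈ P.dom (α k) := by
    intro x
    constructor
    · intro h k
      rcases le_or_gt k N with hk | hk
      · have h0 := h 0
        rw [hβ0, mem_dom_psum] at h0
        exact h0 k hk
      · have hk' := h (k - N)
        rw [show k - N = (k - N - 1) + 1 by omega, hβs,
          show N + (k - N - 1 + 1) = k by omega] at hk'
        exact hk'
    · intro h k
      rcases Nat.eq_zero_or_pos k with hk | hk
      · subst hk
        rw [hβ0]
        exact (mem_dom_psum P α N x).2 fun j _ => h j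
      · obtain ⟨j, rfl⟩ := Nat.exists_eq_add_of_lt hk
        rw [show 0 + j + 1 = j + 1 by omega, hβs]
        exact h _
  have habs : ∀ x : X, (Summable fun k => |P.f (β k) x|)
      ↔ Summable fun k => |P.f (α k) x| := by
    intro x
    rw [← summable_nat_add_iff (f := fun k => |P.f (β k) x|) 1,
      ← summable_nat_add_iff (f := fun k => |P.f (α k) x|) (N + 1)]
    refine summable_congr fun k => ?_
    rw [hβs, show N + (k + 1) = k + (N + 1) by omega]
  refine ⟨N, β, hβ, ?_, ?_, ?_, ?_⟩
  · exact ⟨_, hTlim⟩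
  · ext x
    simp only [dom1, Set.mem_setOf_eq, abs_cond_iff]
    rw [hdom x, habs x]
  · rintro x ⟨hd, hs⟩
    rw [abs_cond_iff] at hs
    have hfα : Summable fun k => P.f (α k) x := hs.of_abs
    have hfβtail : Summable fun k : ℕ => P.f (β (k + 1)) x := by
      refine ((summable_nat_add_iff (N + 1)).2 hfα).congr fun k => ?_
      rw [hβs, show N + (k + 1) = k + (N + 1) by omega]
    have hfβ : Summable fun k : ℕ => P.f (β k) x :=
      (summable_nat_add_iff 1).1 hfβtail
    rw [g1, g1, Summable.tsum_eq_zero_add hfβ, hβ0,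
      f_psum P α N x (fun k _ => hd k),
      ← Summable.sum_add_tsum_nat_add (f := fun k => P.f (α k) x) (N + 1) hfα]
    congr 1
    refine tsum_congr fun k => ?_
    rw [hβs, show N + (k + 1) = k + (N + 1) by omega]
  · refine ⟨_, hTlim, ?_⟩
    have hb1 : P.integ (P.abs (psum P α N)) < L + (1 / 2) ^ (n + 1) :=
      hN₁ N (le_max_left _ _)
    have hb2 : A - (1 / 2) ^ (n + 1)
        < ∑ k ∈ Finset.range (N + 1), P.integ (P.abs (α k)) :=
      hN₂ (N + 1) (le_trans (le_max_right _ _) (Nat.le_succ N))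
    have hpow : (1 / 2 : ℝ) ^ (n + 1) + (1 / 2) ^ (n + 1) = (1 / 2) ^ n := by
      rw [pow_succ]; ring
    linarith
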